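/- arXiv:2002.01556 — 2 statements merged into one kernel-verified Lean document; each statement's English description precedes it below -/
import Mathlib

section
/- Let $G$ be a finite group and let $H \leq G$. Then the idempotent $e_H$ in the rational Burnside ring $A(G)\otimes\QQ$ corresponding (under the fixed-point isomorphism $\Phi$) to the projection onto the factor indexed by the conjugacy class of $H$ is given by $e_H = \sum_{K \leq H} \frac{|K|}{|N_G H|}\,\mu(K,H)\,[G/K]$, where $\mu(K,H)$ is the Möbius function of the subgroup lattice, i.e., $\mu(K,H) = \sum_i (-1)^i c_i$ with $c_i$ the number of strictly increasing chains of subgroups from $K$ to $H$ of length $i$. -/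
/-- The relation of conjugacy on subgroups of `G`. -/
def SubgroupConjRel (G : Type) [Group G] (H K : Subgroup G) : Prop :=
  ∃ g : G, Subgroup.map (MulAut.conj g).toMonoidHom H = K

/-- Conjugacy classes of subgroups of `G`. -/
abbrev SubgroupConjClass (G : Type) [Group G] := Quot (SubgroupConjRel G)

/-- A model for the rational Burnside ring of a finite group `G`: a commutative
`ℚ`-algebra equipped with classes `[X]` for finite `G`-sets `X`, additive under
disjoint union, multiplicative under cartesian product, with unit the one-point
`G`-set, and with `ℚ`-basis given by the classes `[G/H]` indexed by conjugacy
classes of subgroups of `G`. -/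
structure RationalBurnsideRing (G : Type) [Group G] [Finite G] where
  carrier : Type
  [commRing : CommRing carrier]
  [alg : Algebra ℚ carrier]
  cls : (X : Type) → [Finite X] → [MulAction G X] → carrier
  cls_congr : ∀ (X Y : Type) [Finite X] [MulAction G X] [Finite Y] [MulAction G Y]
      (e : X ≃ Y), (∀ (g : G) (x : X), e (g • x) = g • e x) → cls X = cls Y
  cls_add : ∀ (X Y : Type) [Finite X] [MulAction G X] [Finite Y] [MulAction G Y],
      cls (X ⊕ Y) = cls X + cls Y
  cls_mul : ∀ (X Y : Type) [Finite X] [MulAction G X] [Finite Y] [MulAction G Y],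
      cls (X × Y) = cls X * cls Y
  cls_one : cls (G ⧸ (⊤ : Subgroup G)) = 1
  basis : Module.Basis (SubgroupConjClass G) ℚ carrier
  basis_eq : ∀ H : Subgroup G, basis (Quot.mk _ H) = cls (G ⧸ H)

attribute [instance] RationalBurnsideRing.commRing RationalBurnsideRing.alg


open scoped Classical

/-- The number of strictly increasing chains of subgroups from `K` to `H` of length `i`
(a chain of length `i` involves `i+1` subgroups). -/
noncomputable def chainCount (G : Type) [Group G] [Finite G] (K H : Subgroup G) (i : ℕ) : ℕ :=
  Nat.card {f : Fin (i + 1) → Subgroup G // StrictMono f ∧ f 0 = K ∧ f (Fin.last i) = H}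

/-- The Möbius function of the subgroup lattice, `μ(K,H) = Σᵢ (-1)^i cᵢ`, where `cᵢ`
is the number of strictly increasing chains from `K` to `H` of length `i` (summed
over all possible lengths; chains of length exceeding the number of subgroups of `G`
do not exist). -/
noncomputable def subgroupMoebius (G : Type) [Group G] [Finite G] (K H : Subgroup G) : ℚ :=
  ∑ i ∈ Finset.range (Nat.card (Subgroup G) + 1), (-1 : ℚ) ^ i * chainCount G K H i

noncomputable local instance (G : Type) [Group G] [Finite G] : Fintype (Subgroup G) :=
  Fintype.ofFinite _

noncomputable local instance (G : Type) [Group G] [Finite G] : Fintype G :=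
  Fintype.ofFinite _

section Aux

open Finset

variable {G : Type} [Group G]

variable [Finite G]


lemma chainCount_eq_zero_of_not_le {K H : Subgroup G} (h : ¬ K ≤ H) (i : ℕ) :
    chainCount G K H i = 0 := by
  rw [chainCount]
  have : IsEmpty {f : Fin (i + 1) → Subgroup G // StrictMono f ∧ f 0 = K ∧ f (Fin.last i) = H} := by
    constructor
    rintro ⟨f, hf, h0, hl⟩
    exact h (h0 ▸ hl ▸ hf.monotone (Fin.zero_le _))
  exact Nat.card_of_isEmpty

lemma chainCount_self_zero (H : Subgroup G) : chainCount G H H 0 = 1 := by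
  rw [chainCount, Nat.card_eq_one_iff_unique]
  constructor
  · constructor
    rintro ⟨f, _, hf0, _⟩ ⟨g, _, hg0, _⟩
    ext j : 2
    have hj : j = 0 := Fin.ext (by have := j.isLt; omega)
    rw [hj]
    simp only [hf0, hg0]
  · refine ⟨⟨fun _ => H, fun a b hab => ?_, rfl, rfl⟩⟩
    exfalso
    have h1 := a.isLt
    have h2 := b.isLt
    have h3 := Fin.lt_iff_val_lt_val.mp hab
    omega

lemma chainCount_self_succ (H : Subgroup G) (i : ℕ) : chainCount G H H (i + 1) = 0 := by
  rw [chainCount]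
  have : IsEmpty {f : Fin (i + 1 + 1) → Subgroup G //
      StrictMono f ∧ f 0 = H ∧ f (Fin.last (i + 1)) = H} := by
    constructor
    rintro ⟨f, hf, h0, hl⟩
    have : f 0 < f (Fin.last (i + 1)) := hf (by simp [Fin.lt_iff_val_lt_val])
    rw [h0, hl] at this
    exact lt_irrefl _ this
  exact Nat.card_of_isEmpty

/-- chains of length `i` ending at `H` with bottom strictly above `M`. -/
noncomputable def eCount (M H : Subgroup G) (i : ℕ) : ℕ :=
  Nat.card {f : Fin (i + 1) → Subgroup G // StrictMono f ∧ M < f 0 ∧ f (Fin.last i) = H}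

lemma chainCount_succ (M H : Subgroup G) (i : ℕ) :
    chainCount G M H (i + 1) = eCount M H i := by
  rw [chainCount, eCount]
  apply Nat.card_congr
  refine ⟨fun f => ⟨fun j => f.1 j.succ, ?_, ?_, ?_⟩,
          fun g => ⟨Fin.cases M g.1, ?_, ?_, ?_⟩, ?_, ?_⟩
  · exact f.2.1.comp (Fin.strictMono_succ)
  · exact lt_of_le_of_lt (le_of_eq f.2.2.1.symm) (f.2.1 (Fin.succ_pos 0))
  · show f.1 (Fin.last i).succ = H
    rw [Fin.succ_last]; exact f.2.2.2
  · rw [Fin.strictMono_iff_lt_succ]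
    intro j
    refine Fin.cases ?_ ?_ j
    · simp only [Fin.castSucc_zero, Fin.cases_zero, Fin.cases_succ]
      exact g.2.2.1
    · intro j'
      simp only [← Fin.succ_castSucc, Fin.cases_succ]
      exact g.2.1 (Fin.castSucc_lt_succ (i := j'))
  · simp
  · show (Fin.cases M g.1 (Fin.last i).succ : Subgroup G) = H
    rw [Fin.cases_succ]; exact g.2.2.2
  · rintro ⟨f, hf, h0, hl⟩
    ext j : 2
    refine Fin.cases ?_ ?_ j <;> simp [h0]
  · rintro ⟨g, hg⟩
    ext j : 2
    simp

lemma chainCount_card (K H : Subgroup G) (i : ℕ) :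
    chainCount G K H i = (univ.filter (fun f : Fin (i + 1) → Subgroup G =>
      StrictMono f ∧ f 0 = K ∧ f (Fin.last i) = H)).card := by
  rw [chainCount, Nat.card_eq_fintype_card, Fintype.card_subtype]

lemma eCount_card (M H : Subgroup G) (i : ℕ) :
    eCount M H i = (univ.filter (fun f : Fin (i + 1) → Subgroup G =>
      StrictMono f ∧ M < f 0 ∧ f (Fin.last i) = H)).card := by
  rw [eCount, Nat.card_eq_fintype_card, Fintype.card_subtype]

lemma sum_chainCount (M H : Subgroup G) (i : ℕ) :
    ∑ K ∈ univ.filter (fun K => M ≤ K), chainCount G K H i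
      = chainCount G M H i + eCount M H i := by
  have hfib : (univ.filter (fun f : Fin (i + 1) → Subgroup G =>
      StrictMono f ∧ M ≤ f 0 ∧ f (Fin.last i) = H)).card
      = ∑ K ∈ univ.filter (fun K => M ≤ K), chainCount G K H i := by
    rw [Finset.card_eq_sum_card_fiberwise (f := fun f => f 0)
      (t := univ.filter (fun K => M ≤ K)) (fun f hf => by
        simp only [Finset.mem_coe, mem_filter, mem_univ, true_and] at hf ⊢; exact hf.2.1)]
    refine Finset.sum_congr rfl (fun K hK => ?_)
    simp only [mem_filter, mem_univ, true_and] at hK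
    rw [chainCount_card]
    congr 1
    ext f
    simp only [mem_filter, mem_univ, true_and]
    constructor
    · rintro ⟨⟨h1, h2, h3⟩, h4⟩; exact ⟨h1, h4, h3⟩
    · rintro ⟨h1, h2, h3⟩; exact ⟨⟨h1, h2 ▸ hK, h3⟩, h2⟩
  rw [← hfib, chainCount_card, eCount_card]
  rw [← Finset.card_union_of_disjoint]
  · congr 1
    ext f
    simp only [mem_union, mem_filter, mem_univ, true_and]
    constructor
    · rintro ⟨h1, h2, h3⟩
      rcases h2.eq_or_lt with h | h
      · exact Or.inl ⟨h1, h.symm, h3⟩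
      · exact Or.inr ⟨h1, h, h3⟩
    · rintro (⟨h1, h2, h3⟩ | ⟨h1, h2, h3⟩)
      · exact ⟨h1, h2.ge, h3⟩
      · exact ⟨h1, h2.le, h3⟩
  · rw [Finset.disjoint_left]
    rintro f hf hf'
    simp only [mem_filter, mem_univ, true_and] at hf hf'
    rw [hf.2.1] at hf'
    exact lt_irrefl _ hf'.2.1

lemma chainCount_zero_of_ne {M H : Subgroup G} (h : M ≠ H) : chainCount G M H 0 = 0 := by
  rw [chainCount]
  have : IsEmpty {f : Fin (0 + 1) → Subgroup G //
      StrictMono f ∧ f 0 = M ∧ f (Fin.last 0) = H} := by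
    constructor
    rintro ⟨f, _, h0, hl⟩
    exact h (h0 ▸ hl ▸ rfl)
  exact Nat.card_of_isEmpty

lemma eCount_top (M H : Subgroup G) : eCount M H (Nat.card (Subgroup G)) = 0 := by
  rw [eCount]
  have : IsEmpty {f : Fin (Nat.card (Subgroup G) + 1) → Subgroup G //
      StrictMono f ∧ M < f 0 ∧ f (Fin.last _) = H} := by
    constructor
    rintro ⟨f, hf, _, _⟩
    have := Fintype.card_le_of_injective f hf.injective
    rw [Fintype.card_fin, ← Nat.card_eq_fintype_card] at this
    omega
  exact Nat.card_of_isEmpty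

lemma subgroupMoebius_eq_zero_of_not_le {K H : Subgroup G} (h : ¬ K ≤ H) :
    subgroupMoebius G K H = 0 := by
  rw [subgroupMoebius]
  refine Finset.sum_eq_zero (fun i _ => ?_)
  rw [chainCount_eq_zero_of_not_le h]
  simp

lemma subgroupMoebius_self (H : Subgroup G) : subgroupMoebius G H H = 1 := by
  rw [subgroupMoebius]
  rw [Finset.sum_eq_single_of_mem 0 (Finset.mem_range.mpr (by omega))]
  · simp [chainCount_self_zero]
  · intro i _ hi
    obtain ⟨j, rfl⟩ := Nat.exists_eq_succ_of_ne_zero hi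
    rw [chainCount_self_succ]
    simp

lemma hall (M H : Subgroup G) :
    ∑ K ∈ univ.filter (fun K => M ≤ K), subgroupMoebius G K H
      = if M = H then 1 else 0 := by
  by_cases hMH : M = H
  · subst hMH
    rw [if_pos rfl]
    rw [Finset.sum_eq_single_of_mem M (by simp)]
    · exact subgroupMoebius_self M
    · intro K hK hKne
      simp only [mem_filter, mem_univ, true_and] at hK
      exact subgroupMoebius_eq_zero_of_not_le (fun hle => hKne (le_antisymm hle hK))
  · rw [if_neg hMH]
    simp only [subgroupMoebius]
    rw [Finset.sum_comm]
    have step : ∀ i, ∑ K ∈ univ.filter (fun K => M ≤ K), (-1 : ℚ) ^ i * chainCount G K H i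
        = (-1 : ℚ) ^ i * (chainCount G M H i + eCount M H i) := by
      intro i
      rw [← Finset.mul_sum]
      congr 1
      rw [← Nat.cast_sum, sum_chainCount M H i, Nat.cast_add]
    rw [Finset.sum_congr rfl (fun i _ => step i)]
    have e1 : ∑ i ∈ Finset.range (Nat.card (Subgroup G) + 1),
        (-1 : ℚ) ^ i * (chainCount G M H i + eCount M H i)
        = (∑ i ∈ Finset.range (Nat.card (Subgroup G) + 1), (-1 : ℚ) ^ i * chainCount G M H i)
          + ∑ i ∈ Finset.range (Nat.card (Subgroup G) + 1), (-1 : ℚ) ^ i * eCount M H i := by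
      rw [← Finset.sum_add_distrib]
      exact Finset.sum_congr rfl (fun i _ => by ring)
    rw [e1]
    rw [Finset.sum_range_succ' (fun i => (-1 : ℚ) ^ i * chainCount G M H i)]
    rw [Finset.sum_range_succ (fun i => (-1 : ℚ) ^ i * eCount M H i)]
    rw [chainCount_zero_of_ne hMH, eCount_top]
    have e2 : ∀ i, (-1 : ℚ) ^ (i + 1) * chainCount G M H (i + 1)
        = -((-1 : ℚ) ^ i * eCount M H i) := by
      intro i
      rw [chainCount_succ]
      ring
    rw [Finset.sum_congr rfl (fun i _ => e2 i), Finset.sum_neg_distrib]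
    simp


lemma mem_conj_map {L : Subgroup G} {g x : G} :
    x ∈ Subgroup.map (MulAut.conj g).toMonoidHom L ↔ g⁻¹ * x * g ∈ L := by
  simp only [Subgroup.mem_map, MulAut.conj_apply, MulEquiv.coe_toMonoidHom]
  constructor
  · rintro ⟨y, hy, rfl⟩; simpa [mul_assoc] using hy
  · intro h; exact ⟨g⁻¹ * x * g, h, by group⟩

lemma conj_map_conj_map (a b : G) (L : Subgroup G) :
    Subgroup.map (MulAut.conj a).toMonoidHom (Subgroup.map (MulAut.conj b).toMonoidHom L)
      = Subgroup.map (MulAut.conj (a * b)).toMonoidHom L := by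
  ext x
  simp only [mem_conj_map, mul_inv_rev, mul_assoc]

lemma conj_map_one (L : Subgroup G) :
    Subgroup.map (MulAut.conj (1 : G)).toMonoidHom L = L := by
  ext x; simp [mem_conj_map]

lemma subgroupConjRel_equivalence : Equivalence (SubgroupConjRel G) := by
  constructor
  · exact fun L => ⟨1, conj_map_one L⟩
  · rintro L K ⟨g, rfl⟩
    exact ⟨g⁻¹, by rw [conj_map_conj_map, inv_mul_cancel, conj_map_one]⟩
  · rintro L K M ⟨a, rfl⟩ ⟨b, rfl⟩
    exact ⟨b * a, (conj_map_conj_map b a L).symm⟩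

lemma quot_mk_eq_iff (L H : Subgroup G) :
    Quot.mk (SubgroupConjRel G) L = Quot.mk (SubgroupConjRel G) H ↔ SubgroupConjRel G L H :=
  Quot.eq.trans (subgroupConjRel_equivalence.eqvGen_iff)

lemma conj_map_self_iff (n : G) (H : Subgroup G) :
    Subgroup.map (MulAut.conj n).toMonoidHom H = H ↔ n ∈ (Subgroup.normalizer (H : Set G)) := by
  rw [Subgroup.mem_normalizer_iff]
  constructor
  · intro h x
    constructor
    · intro hx
      rw [← h, mem_conj_map]
      simpa [mul_assoc] using hx
    · intro hx
      rw [← h, mem_conj_map] at hx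
      simpa [mul_assoc] using hx
  · intro h
    ext x
    rw [mem_conj_map]
    have h2 := h (n⁻¹ * x * n)
    have e : n * (n⁻¹ * x * n) * n⁻¹ = x := by group
    rw [e] at h2
    exact h2

lemma card_conj_eq (L H : Subgroup G) [Finite G] :
    Nat.card {g : G // Subgroup.map (MulAut.conj g⁻¹).toMonoidHom L = H}
      = if Quot.mk (SubgroupConjRel G) L = Quot.mk (SubgroupConjRel G) H
        then Nat.card (Subgroup.normalizer (H : Set G)) else 0 := by
  rw [quot_mk_eq_iff]
  by_cases hc : SubgroupConjRel G L H
  · rw [if_pos hc]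
    obtain ⟨a, ha⟩ := hc
    have hg0 : Subgroup.map (MulAut.conj (a⁻¹)⁻¹).toMonoidHom L = H := by simpa using ha
    set g₀ := a⁻¹ with hgdef
    apply Nat.card_congr
    refine ⟨fun g => ⟨g₀⁻¹ * g.1, ?_⟩, fun n => ⟨g₀ * n.1, ?_⟩, ?_, ?_⟩
    · rw [← conj_map_self_iff]
      have : Subgroup.map (MulAut.conj (g₀⁻¹ * g.1)).toMonoidHom
          (Subgroup.map (MulAut.conj (g.1)⁻¹).toMonoidHom L)
          = Subgroup.map (MulAut.conj g₀⁻¹).toMonoidHom L := by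
        rw [conj_map_conj_map]
        congr 2
        group
      rw [g.2, hg0] at this
      exact this
    · have h1 : Subgroup.map (MulAut.conj (n.1)⁻¹).toMonoidHom H = H := by
        rw [conj_map_self_iff]
        exact (Subgroup.normalizer (H : Set G)).inv_mem n.2
      show Subgroup.map (MulAut.conj (g₀ * n.1)⁻¹).toMonoidHom L = H
      have e : Subgroup.map (MulAut.conj (g₀ * n.1)⁻¹).toMonoidHom L
          = Subgroup.map (MulAut.conj (n.1)⁻¹).toMonoidHom
              (Subgroup.map (MulAut.conj g₀⁻¹).toMonoidHom L) := by
        rw [conj_map_conj_map]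
        congr 2
        group
      rw [e, hg0, h1]
    · rintro ⟨g, hg⟩
      ext
      show g₀ * (g₀⁻¹ * g) = g
      group
    · rintro ⟨n, hn⟩
      ext
      show g₀⁻¹ * (g₀ * n) = n
      group
  · rw [if_neg hc]
    have : IsEmpty {g : G // Subgroup.map (MulAut.conj g⁻¹).toMonoidHom L = H} := by
      constructor
      rintro ⟨g, hg⟩
      exact hc ⟨g⁻¹, hg⟩
    exact Nat.card_of_isEmpty

lemma fixed_iff (L K : Subgroup G) (g : G) :
    Subgroup.map (MulAut.conj g⁻¹).toMonoidHom L ≤ K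
      ↔ (QuotientGroup.mk g : G ⧸ K) ∈ MulAction.fixedPoints L (G ⧸ K) := by
  rw [MulAction.mem_fixedPoints]
  constructor
  · intro h l
    show (l : G) • (QuotientGroup.mk g : G ⧸ K) = QuotientGroup.mk g
    show (QuotientGroup.mk ((l : G) * g) : G ⧸ K) = QuotientGroup.mk g
    rw [QuotientGroup.eq]
    have : ((l : G) * g)⁻¹ * g = g⁻¹ * (l : G)⁻¹ * g := by group
    rw [this]
    apply h
    rw [mem_conj_map]
    have e2 : (g⁻¹)⁻¹ * (g⁻¹ * (l : G)⁻¹ * g) * g⁻¹ = (l : G)⁻¹ := by group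
    rw [e2]
    exact L.inv_mem l.2
  · intro h x hx
    rw [mem_conj_map] at hx
    have hmem : g * x⁻¹ * g⁻¹ ∈ L := by
      have e3 : g * x⁻¹ * g⁻¹ = ((g⁻¹)⁻¹ * x * g⁻¹)⁻¹ := by group
      rw [e3]
      exact L.inv_mem hx
    have h1 := h ⟨g * x⁻¹ * g⁻¹, hmem⟩
    have h2 : (QuotientGroup.mk ((g * x⁻¹ * g⁻¹) * g) : G ⧸ K) = QuotientGroup.mk g := h1
    rw [QuotientGroup.eq] at h2
    have e4 : (g * x⁻¹ * g⁻¹ * g)⁻¹ * g = x := by group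
    rw [e4] at h2
    exact h2

lemma card_conj_le (L K : Subgroup G) [Finite G] :
    Nat.card {g : G // Subgroup.map (MulAut.conj g⁻¹).toMonoidHom L ≤ K}
      = Nat.card (MulAction.fixedPoints L (G ⧸ K)) * Nat.card K := by
  rw [← Nat.card_prod]
  apply Nat.card_congr
  refine ⟨fun g => ⟨⟨QuotientGroup.mk g.1, (fixed_iff L K g.1).mp g.2⟩,
      ⟨(QuotientGroup.mk g.1 : G ⧸ K).out⁻¹ * g.1, ?_⟩⟩,
    fun x => ⟨x.1.1.out * x.2.1, ?_⟩, ?_, ?_⟩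
  · rw [← QuotientGroup.eq, QuotientGroup.out_eq']
  · rw [fixed_iff]
    have : (QuotientGroup.mk (x.1.1.out * x.2.1) : G ⧸ K) = x.1.1 := by
      rw [QuotientGroup.mk_mul_of_mem _ x.2.2, QuotientGroup.out_eq']
    rw [this]
    exact x.1.2
  · rintro ⟨g, hg⟩
    ext
    show (QuotientGroup.mk g : G ⧸ K).out * ((QuotientGroup.mk g : G ⧸ K).out⁻¹ * g) = g
    group
  · rintro ⟨⟨x, hx⟩, ⟨k, hk⟩⟩
    have hmk : (QuotientGroup.mk (x.out * k) : G ⧸ K) = x := by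
      rw [QuotientGroup.mk_mul_of_mem _ hk, QuotientGroup.out_eq']
    refine Prod.ext (Subtype.ext ?_) (Subtype.ext ?_)
    · exact hmk
    · show (QuotientGroup.mk (x.out * k) : G ⧸ K).out⁻¹ * (x.out * k) = k
      rw [hmk]
      group

lemma key_sum (L H : Subgroup G) :
    ∑ K ∈ univ.filter (fun K => K ≤ H), subgroupMoebius G K H *
        (Nat.card {g : G // Subgroup.map (MulAut.conj g⁻¹).toMonoidHom L ≤ K} : ℚ)
      = if Quot.mk (SubgroupConjRel G) L = Quot.mk (SubgroupConjRel G) H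
        then (Nat.card (Subgroup.normalizer (H : Set G)) : ℚ) else 0 := by
  have hcard : ∀ K : Subgroup G,
      (Nat.card {g : G // Subgroup.map (MulAut.conj g⁻¹).toMonoidHom L ≤ K} : ℚ)
      = ∑ g : G, if Subgroup.map (MulAut.conj g⁻¹).toMonoidHom L ≤ K then (1 : ℚ) else 0 := by
    intro K
    rw [Nat.card_eq_fintype_card, Fintype.card_subtype, Finset.sum_boole]
  calc ∑ K ∈ univ.filter (fun K => K ≤ H), subgroupMoebius G K H *
        (Nat.card {g : G // Subgroup.map (MulAut.conj g⁻¹).toMonoidHom L ≤ K} : ℚ)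
      = ∑ K ∈ univ.filter (fun K => K ≤ H), ∑ g : G,
          (if Subgroup.map (MulAut.conj g⁻¹).toMonoidHom L ≤ K
            then subgroupMoebius G K H else 0) := by
        refine Finset.sum_congr rfl (fun K _ => ?_)
        rw [hcard, Finset.mul_sum]
        exact Finset.sum_congr rfl (fun g _ => by split_ifs <;> simp)
    _ = ∑ g : G, ∑ K ∈ univ.filter (fun K => K ≤ H),
          (if Subgroup.map (MulAut.conj g⁻¹).toMonoidHom L ≤ K
            then subgroupMoebius G K H else 0) := Finset.sum_comm
    _ = ∑ g : G, (if Subgroup.map (MulAut.conj g⁻¹).toMonoidHom L = H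
            then (1 : ℚ) else 0) := by
        refine Finset.sum_congr rfl (fun g _ => ?_)
        rw [← Finset.sum_filter, Finset.filter_filter]
        rw [show (univ.filter (fun K : Subgroup G => K ≤ H ∧
            Subgroup.map (MulAut.conj g⁻¹).toMonoidHom L ≤ K))
          = (univ.filter (fun K : Subgroup G =>
              Subgroup.map (MulAut.conj g⁻¹).toMonoidHom L ≤ K)).filter (fun K => K ≤ H) from by
            rw [Finset.filter_filter]
            exact Finset.filter_congr (fun K _ => by tauto)]
        rw [Finset.sum_filter_of_ne (fun K _ hne => by
          by_contra hKH
          exact hne (subgroupMoebius_eq_zero_of_not_le hKH))]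
        exact hall _ H
    _ = _ := by
        rw [Finset.sum_boole, ← Fintype.card_subtype, ← Nat.card_eq_fintype_card,
          card_conj_eq L H]
        split_ifs <;> simp

end Aux
/-- the idempotent `e_H` of the rational Burnside ring corresponding,
under the mark (fixed-point) isomorphism `Φ`, to projection onto the factor indexed
by the conjugacy class `(H)`, is `e_H = Σ_{K ≤ H} (|K|/|N_G H|) μ(K,H) [G/K]`. -/
theorem burnside_idempotent_formula (G : Type) [Group G] [Finite G]
    (A : RationalBurnsideRing G) (Φ : A.carrier ≃+* (SubgroupConjClass G → ℚ))
    (hΦ : ∀ (X : Type) [Finite X] [MulAction G X],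
      Φ (A.cls X) = fun c : SubgroupConjClass G =>
        (Nat.card (MulAction.fixedPoints ↥(Quot.out c) X) : ℚ))
    (H : Subgroup G) :
    Φ.symm (fun c : SubgroupConjClass G => if c = Quot.mk _ H then 1 else 0) =
      ∑ᶠ (K : Subgroup G) (_ : K ≤ H),
        (((Nat.card K : ℚ) / (Nat.card (Subgroup.normalizer (H : Set G)) : ℚ)) * subgroupMoebius G K H) •
          A.cls (G ⧸ K) := by
  classical
  haveI : Nonempty (Subgroup.normalizer (H : Set G)) := ⟨1, (Subgroup.normalizer (H : Set G)).one_mem⟩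
  have hNnz : (Nat.card (Subgroup.normalizer (H : Set G)) : ℚ) ≠ 0 := by
    exact_mod_cast Nat.card_pos.ne'
  have hinv : ∀ (v : SubgroupConjClass G → ℚ) (s : A.carrier), Φ s = v → Φ.symm v = s :=
    fun v s h => by rw [← h, RingEquiv.symm_apply_apply]
  refine hinv _ _ ?_
  have hsmul : ∀ (q : ℚ) (a : A.carrier), Φ (q • a) = q • Φ a := by
    intro q a
    rw [Algebra.smul_def, map_mul, Algebra.smul_def]
    congr 1
    have := RingHom.ext_rat
      ((Φ : A.carrier →+* (SubgroupConjClass G → ℚ)).comp (algebraMap ℚ A.carrier))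
      (algebraMap ℚ (SubgroupConjClass G → ℚ))
    exact DFunLike.congr_fun this q
  have hfin : (∑ᶠ (K : Subgroup G) (_ : K ≤ H),
      (((Nat.card K : ℚ) / (Nat.card (Subgroup.normalizer (H : Set G)) : ℚ)) * subgroupMoebius G K H) • A.cls (G ⧸ K))
      = ∑ K ∈ Finset.univ.filter (fun K => K ≤ H),
        (((Nat.card K : ℚ) / (Nat.card (Subgroup.normalizer (H : Set G)) : ℚ)) * subgroupMoebius G K H) •
          A.cls (G ⧸ K) :=
    finsum_cond_eq_sum_of_cond_iff _ (fun {K} _ => by simp)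
  rw [hfin, map_sum]
  funext c
  rw [Finset.sum_apply]
  have hc : Quot.mk (SubgroupConjRel G) (Quot.out c) = c := Quot.out_eq c
  have hterm : ∀ K ∈ Finset.univ.filter (fun K : Subgroup G => K ≤ H),
      (Φ ((((Nat.card K : ℚ) / (Nat.card (Subgroup.normalizer (H : Set G)) : ℚ)) * subgroupMoebius G K H) •
          A.cls (G ⧸ K))) c
      = subgroupMoebius G K H *
          (Nat.card {g : G // Subgroup.map (MulAut.conj g⁻¹).toMonoidHom (Quot.out c) ≤ K} : ℚ)
          * (Nat.card (Subgroup.normalizer (H : Set G)) : ℚ)⁻¹ := by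
    intro K _
    rw [hsmul]
    have happ : Φ (A.cls (G ⧸ K)) c
        = (Nat.card (MulAction.fixedPoints (↥(Quot.out c)) (G ⧸ K)) : ℚ) :=
      congrFun (hΦ (G ⧸ K)) c
    rw [Pi.smul_apply, happ, smul_eq_mul]
    have hn : (Nat.card {g : G // Subgroup.map (MulAut.conj g⁻¹).toMonoidHom (Quot.out c) ≤ K} : ℚ)
        = (Nat.card (MulAction.fixedPoints (↥(Quot.out c)) (G ⧸ K)) : ℚ) * (Nat.card K : ℚ) := by
      exact_mod_cast congrArg Nat.cast (card_conj_le (Quot.out c) K)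
    rw [hn]
    ring
  rw [Finset.sum_congr rfl hterm, ← Finset.sum_mul, key_sum (Quot.out c) H, hc]
  split_ifs with hch
  · exact mul_inv_cancel₀ hNnz
  · exact zero_mul _
end

section
/- The CDGA $D_\bullet = \QQ[\gamma,\bar\gamma] \otimes E(y)$ with $|\gamma| = 2$, $|\bar\gamma| = -2$, $|y| = 1$, $d(\gamma) = d(\bar\gamma) = 0$, and $d(y) = 1 - \gamma\bar\gamma$ has homology isomorphic as a graded $\QQ$-algebra to the Laurent polynomial ring $\QQ[\beta^{\pm 1}]$ with $|\beta| = 2$, the isomorphism sending the class of $\gamma$ to $\beta$. -/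
/-- A `ℤ`-graded commutative (in the graded sense) differential graded algebra
over `ℚ`: a `ℚ`-algebra with an internal `ℤ`-grading by `ℚ`-submodules, graded
commutativity with Koszul signs, and a degree `-1` differential satisfying the
signed Leibniz rule. -/
structure CDGA where
  carrier : Type
  [ring : Ring carrier]
  [alg : Algebra ℚ carrier]
  grading : ℤ → Submodule ℚ carrier
  isInternal : DirectSum.IsInternal grading
  one_mem : (1 : carrier) ∈ grading 0
  mul_mem : ∀ {i j : ℤ} {x y : carrier},
    x ∈ grading i → y ∈ grading j → x * y ∈ grading (i + j)
  gcomm : ∀ {i j : ℤ} {x y : carrier}, x ∈ grading i → y ∈ grading j →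
    x * y = ((-1 : ℚ) ^ (i * j)) • (y * x)
  d : carrier →ₗ[ℚ] carrier
  d_mem : ∀ {i : ℤ} {x : carrier}, x ∈ grading i → d x ∈ grading (i - 1)
  d_d : ∀ x : carrier, d (d x) = 0
  leibniz : ∀ {i : ℤ} {x y : carrier}, x ∈ grading i →
    d (x * y) = d x * y + ((-1 : ℚ) ^ i) • (x * d y)

attribute [instance] CDGA.ring CDGA.alg

namespace CDGA

/-- `x` is a boundary in degree `k`, i.e. `x = d z` for some `z` of degree `k + 1`. -/
def IsBoundary (A : CDGA) (k : ℤ) (x : A.carrier) : Prop :=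
  ∃ z ∈ A.grading (k + 1), A.d z = x

/-- A morphism of CDGAs: a `ℚ`-algebra homomorphism preserving the grading and
commuting with the differentials. -/
structure Hom (A B : CDGA) where
  toFun : A.carrier →ₐ[ℚ] B.carrier
  map_grading : ∀ {i : ℤ} {x : A.carrier}, x ∈ A.grading i → toFun x ∈ B.grading i
  map_d : ∀ x : A.carrier, toFun (A.d x) = B.d (toFun x)

/-- A quasi-isomorphism of CDGAs: a morphism inducing an isomorphism on homology
in every degree. -/
def QuasiIso {A B : CDGA} (f : Hom A B) : Prop :=
  ∀ k : ℤ,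
    (∀ y ∈ B.grading k, B.d y = 0 →
      ∃ x ∈ A.grading k, A.d x = 0 ∧ B.IsBoundary k (f.toFun x - y)) ∧
    (∀ x ∈ A.grading k, A.d x = 0 → B.IsBoundary k (f.toFun x) → A.IsBoundary k x)

/-- `β^k` for `k : ℤ`, expressed via `β` and a chosen inverse `β'`. -/
def ipow {R : Type} [Ring R] (β β' : R) (k : ℤ) : R :=
  if 0 ≤ k then β ^ k.toNat else β' ^ (-k).toNat

/-- The homology of `A` is the Laurent algebra `ℚ[β^{±1}]`, `|β| = 2`, with `β` the
class of the cycle `β` (with chosen homology inverse `β'`): odd homology vanishes,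
and the homology in degree `2k` is one-dimensional, spanned by the (nonzero) class
of `β^k`. -/
def HomologyIsLaurentOn (A : CDGA) (β β' : A.carrier) : Prop :=
  β ∈ A.grading 2 ∧ β' ∈ A.grading (-2) ∧ A.d β = 0 ∧ A.d β' = 0 ∧
  A.IsBoundary 0 (β * β' - 1) ∧
  (∀ k : ℤ, ∀ x ∈ A.grading (2 * k + 1), A.d x = 0 → A.IsBoundary (2 * k + 1) x) ∧
  (∀ k : ℤ, ∀ x ∈ A.grading (2 * k), A.d x = 0 →
    ∃ c : ℚ, A.IsBoundary (2 * k) (x - c • ipow β β' k)) ∧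
  (∀ k : ℤ, ¬ A.IsBoundary (2 * k) (ipow β β' k))

end CDGA

open CDGA

/-!
On the basis `γ^a γ'^c y^ε` the differential kills the `y`-free monomials and sends
`γ^a γ'^c y` to `γ^a γ'^c - γ^(a+1) γ'^(c+1)`. Reading off the coefficients of `d x` along the
diagonals `(a + n, c + n)` shows that a cycle has no `y`-component, so odd homology vanishes, and
in degree `2k` every monomial `γ^a γ'^c` with `a - c = k` is homologous to `γ^k` (resp. `γ'^(-k)`).
The functional summing the coefficients of the `y`-free monomials kills boundaries and is `1` on
`γ^k`, so that class is nonzero. Boundary witnesses can be chosen homogeneous because `d` is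
homogeneous of degree `-1`.
-/

open DirectSum

section GradedModule

variable {ι κ R M : Type*} [DecidableEq ι] [Ring R] [AddCommGroup M] [Module R M]
  {N : ι → Submodule R M} [Decomposition N]

theorem Module.Basis.repr_eq_zero_of_mem_of_ne (b : Module.Basis κ R M) (deg : κ → ι)
    (hb : ∀ p, b p ∈ N (deg p)) {i : ι} {x : M} (hx : x ∈ N i) {p : κ} (hp : deg p ≠ i) :
    b.repr x p = 0 := by
  have hproj : b.coord p ∘ₗ (N (deg p)).subtype ∘ₗ component R ι (fun j => N j) (deg p) ∘ₗ
      (decomposeLinearEquiv N : M →ₗ[R] ⨁ j, N j) = b.coord p := by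
    refine b.ext fun q => ?_
    by_cases hq : deg q = deg p
    · simp [← apply_eq_component, decomposeLinearEquiv_apply, decompose_of_mem_same N (hq ▸ hb q)]
    · simp [← apply_eq_component, decomposeLinearEquiv_apply, decompose_of_mem_ne N (hb q) hq,
        Finsupp.single_eq_of_ne (fun h : p = q => hq (h ▸ rfl))]
  simpa [← apply_eq_component, decomposeLinearEquiv_apply, decompose_of_mem_ne N hx hp.symm] using
    (LinearMap.congr_fun hproj x).symm

theorem DirectSum.coe_decompose_map_of_map_mem [AddCommGroup ι] (f : M →ₗ[R] M) {s : ι}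
    (hf : ∀ {j : ι} {x : M}, x ∈ N j → f x ∈ N (j + s)) (z : M) (i : ι) :
    (decompose N (f z) (i + s) : M) = f (decompose N z i) := by
  induction z using Decomposition.inductionOn N with
  | zero => simp
  | @homogeneous j z =>
    obtain ⟨z, hz⟩ := z
    by_cases hj : j = i
    · subst hj
      simp [decompose_of_mem_same N hz, decompose_of_mem_same N (hf hz)]
    · have hjs : j + s ≠ i + s := by simpa using hj
      simp [decompose_of_mem_ne N hz hj, decompose_of_mem_ne N (hf hz) hjs]
  | add z z' hz hz' => simp [hz, hz']

end GradedModule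

namespace KoszulComplex

variable {R M : Type*} [CommRing R] [AddCommGroup M] [Module R M]
  (b : Module.Basis (ℕ × ℕ × Bool) R M) {d : M →ₗ[R] M}
  (hd₁ : ∀ a c, d (b (a, c, true)) = b (a, c, false) - b (a + 1, c + 1, false))
  (hd₀ : ∀ a c, d (b (a, c, false)) = 0)
include hd₁

theorem basis_sub_basis_mem_range {a c a' c' : ℕ} (h : (a : ℤ) - c = a' - c') :
    b (a, c, false) - b (a', c', false) ∈ LinearMap.range d := by
  have key : ∀ a c n, b (a, c, false) - b (a + n, c + n, false) ∈ LinearMap.range d :=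
    fun a c n => ⟨∑ j ∈ Finset.range n, b (a + j, c + j, true), by
      simpa [hd₁, add_assoc] using Finset.sum_range_sub' (fun j => b (a + j, c + j, false)) n⟩
  rcases le_total a a' with haa' | haa'
  · obtain ⟨n, rfl⟩ := Nat.exists_eq_add_of_le haa'
    obtain rfl : c' = c + n := by omega
    exact key a c n
  · obtain ⟨n, rfl⟩ := Nat.exists_eq_add_of_le haa'
    obtain rfl : c = c' + n := by omega
    simpa using (LinearMap.range d).neg_mem (key a' c' n)

theorem sub_smul_basis_mem_range {x : M} (k : ℤ)
    (hx : ∀ p, b.repr x p ≠ 0 → ∃ a c : ℕ, p = (a, c, false) ∧ (a : ℤ) - c = k) :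
    x - (∑ p ∈ (b.repr x).support, b.repr x p) • b (k.toNat, (-k).toNat, false) ∈
      LinearMap.range d := by
  nth_rewrite 1 [← b.linearCombination_repr x]
  rw [Finsupp.linearCombination_apply, Finsupp.sum, Finset.sum_smul, ← Finset.sum_sub_distrib]
  refine Submodule.sum_mem _ fun p hp => ?_
  obtain ⟨a, c, rfl, hac⟩ := hx p (Finsupp.mem_support_iff.mp hp)
  rw [← smul_sub]
  exact Submodule.smul_mem _ _ (basis_sub_basis_mem_range b hd₁ (by omega))

include hd₀

theorem basis_false_notMem_range [Nontrivial R] (a c : ℕ) :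
    b (a, c, false) ∉ LinearMap.range d := by
  let φ : M →ₗ[R] R := b.constr R fun p => cond p.2.2 0 1
  have hφd : φ ∘ₗ d = 0 := b.ext fun ⟨a', c', ε⟩ => by cases ε <;> simp [φ, hd₀, hd₁]
  rintro ⟨z, hz⟩
  simpa [φ, hz] using LinearMap.congr_fun hφd z

theorem repr_d_succ (x : M) (a c : ℕ) :
    b.repr (d x) (a + 1, c + 1, false) = b.repr x (a + 1, c + 1, true) - b.repr x (a, c, true) := by
  have h : b.coord (a + 1, c + 1, false) ∘ₗ d =
      b.coord (a + 1, c + 1, true) - b.coord (a, c, true) := by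
    refine b.ext fun ⟨a', c', ε⟩ => ?_
    cases ε <;> simp [hd₀, hd₁, Finsupp.single_apply]
  exact LinearMap.congr_fun h x

theorem repr_d_of_eq_zero_or_eq_zero (x : M) {a c : ℕ} (hac : a = 0 ∨ c = 0) :
    b.repr (d x) (a, c, false) = b.repr x (a, c, true) := by
  have h : b.coord (a, c, false) ∘ₗ d = b.coord (a, c, true) := by
    refine b.ext fun ⟨a', c', ε⟩ => ?_
    cases ε
    · simp [hd₀]
    · simp [hd₁, Finsupp.single_apply]
      omega
  exact LinearMap.congr_fun h x

theorem repr_true_eq_zero_of_d_eq_zero {x : M} (hx : d x = 0) : ∀ a c, b.repr x (a, c, true) = 0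
  | 0, c => by simpa [hx] using (repr_d_of_eq_zero_or_eq_zero b hd₁ hd₀ x (Or.inl rfl)).symm
  | a + 1, 0 => by simpa [hx] using (repr_d_of_eq_zero_or_eq_zero b hd₁ hd₀ x (Or.inr rfl)).symm
  | a + 1, c + 1 => by
    simpa [hx, repr_true_eq_zero_of_d_eq_zero hx a c] using (repr_d_succ b hd₁ hd₀ x a c).symm

end KoszulComplex

namespace CDGA

noncomputable instance (A : CDGA) : Decomposition A.grading := A.isInternal.chooseDecomposition

variable (A : CDGA)

theorem isBoundary_of_mem_range {k : ℤ} {x : A.carrier} (hx : x ∈ A.grading k)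
    (hrange : x ∈ LinearMap.range A.d) : A.IsBoundary k x := by
  obtain ⟨z, rfl⟩ := hrange
  refine ⟨decompose A.grading z (k + 1), Submodule.coe_mem _, ?_⟩
  have hd : ∀ {j : ℤ} {x : A.carrier}, x ∈ A.grading j → A.d x ∈ A.grading (j + -1) := fun hx => by
    simpa [sub_eq_add_neg] using A.d_mem hx
  rw [← coe_decompose_map_of_map_mem A.d hd, add_neg_cancel_right,
    decompose_of_mem_same A.grading hx]

theorem d_one : A.d 1 = 0 := by
  simpa using A.leibniz (x := 1) (y := 1) A.one_mem

theorem pow_mem {x : A.carrier} {i : ℤ} (hx : x ∈ A.grading i) : ∀ n : ℕ, x ^ n ∈ A.grading (n * i)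
  | 0 => by simpa using A.one_mem
  | n + 1 => by
    rw [pow_succ', Nat.cast_succ, add_mul, one_mul, add_comm]
    exact A.mul_mem hx (pow_mem hx n)

theorem d_mul_of_d_eq_zero {x : A.carrier} {i : ℤ} (hx : x ∈ A.grading i) (hdx : A.d x = 0)
    (y : A.carrier) : A.d (x * y) = (-1 : ℚ) ^ i • (x * A.d y) := by
  simp [A.leibniz hx, hdx]

theorem d_pow {x : A.carrier} {i : ℤ} (hx : x ∈ A.grading i) (hdx : A.d x = 0) :
    ∀ n : ℕ, A.d (x ^ n) = 0
  | 0 => by simpa using A.d_one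
  | n + 1 => by simp [pow_succ', A.d_mul_of_d_eq_zero hx hdx, d_pow hx hdx n]

theorem commute_of_even {i j : ℤ} {x z : A.carrier} (hx : x ∈ A.grading i)
    (hz : z ∈ A.grading j) (h : Even (i * j)) : Commute x z := by
  rw [Commute, SemiconjBy, A.gcomm hx hz, h.neg_one_zpow, one_smul]

end CDGA

namespace KoszulLaurent

variable {D : CDGA} {γ γ' y : D.carrier} (hγ : γ ∈ D.grading 2) (hγ' : γ' ∈ D.grading (-2))
  (hdγ : D.d γ = 0) (hdγ' : D.d γ' = 0)

section Monomial

include hγ hγ'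

theorem monomial_mem (a c : ℕ) : γ ^ a * γ' ^ c ∈ D.grading (2 * a - 2 * c) := by
  convert D.mul_mem (D.pow_mem hγ a) (D.pow_mem hγ' c) using 2
  ring

theorem monomial_mul_mul (a c : ℕ) : γ ^ a * γ' ^ c * (γ * γ') = γ ^ (a + 1) * γ' ^ (c + 1) := by
  have hcomm : Commute (γ' ^ c) γ := D.commute_of_even (D.pow_mem hγ' c) hγ ⟨-(2 * c), by ring⟩
  rw [pow_succ, pow_succ, mul_assoc, ← mul_assoc (γ' ^ c), hcomm.eq]
  simp only [mul_assoc]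

include hdγ hdγ'

theorem d_monomial (a c : ℕ) : D.d (γ ^ a * γ' ^ c) = 0 := by
  simp [D.d_mul_of_d_eq_zero (D.pow_mem hγ a) (D.d_pow hγ hdγ a), D.d_pow hγ' hdγ' c]

theorem d_monomial_mul (hdy : D.d y = 1 - γ * γ') (a c : ℕ) :
    D.d (γ ^ a * γ' ^ c * y) = γ ^ a * γ' ^ c - γ ^ (a + 1) * γ' ^ (c + 1) := by
  rw [D.d_mul_of_d_eq_zero (monomial_mem hγ hγ' a c) (d_monomial hγ hγ' hdγ hdγ' a c), hdy,
    Even.neg_one_zpow ⟨(a : ℤ) - c, by ring⟩, one_smul, mul_sub, mul_one,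
    monomial_mul_mul hγ hγ']

end Monomial

def monomialDegree (p : ℕ × ℕ × Bool) : ℤ := 2 * p.1 - 2 * p.2.1 + cond p.2.2 1 0

variable {b : Module.Basis (ℕ × ℕ × Bool) ℚ D.carrier}
  (hb : ∀ p : ℕ × ℕ × Bool, b p = γ ^ p.1 * γ' ^ p.2.1 * (cond p.2.2 y 1))
include hb

theorem basis_false_eq (a c : ℕ) : b (a, c, false) = γ ^ a * γ' ^ c := by
  simp [hb]

theorem ipow_eq_basis (k : ℤ) : ipow γ γ' k = b (k.toNat, (-k).toNat, false) := by
  rw [basis_false_eq hb, ipow]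
  split_ifs with hk
  · simp [Int.toNat_eq_zero.mpr (neg_nonpos.mpr hk)]
  · simp [Int.toNat_eq_zero.mpr (not_le.mp hk).le]

include hγ hγ'

theorem basis_mem (hy : y ∈ D.grading 1) (p : ℕ × ℕ × Bool) :
    b p ∈ D.grading (monomialDegree p) := by
  obtain ⟨a, c, _ | _⟩ := p
  · simpa [hb, monomialDegree] using monomial_mem hγ hγ' a c
  · simpa [hb, monomialDegree] using D.mul_mem (monomial_mem hγ hγ' a c) hy

include hdγ hdγ'

theorem d_basis_false (a c : ℕ) : D.d (b (a, c, false)) = 0 := by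
  rw [basis_false_eq hb, d_monomial hγ hγ' hdγ hdγ']

theorem d_basis_true (hdy : D.d y = 1 - γ * γ') (a c : ℕ) :
    D.d (b (a, c, true)) = b (a, c, false) - b (a + 1, c + 1, false) := by
  simpa [hb] using d_monomial_mul hγ hγ' hdγ hdγ' hdy a c

theorem exists_eq_false_of_repr_ne_zero (hy : y ∈ D.grading 1) (hdy : D.d y = 1 - γ * γ')
    {i : ℤ} {x : D.carrier} (hx : x ∈ D.grading i) (hdx : D.d x = 0) {p : ℕ × ℕ × Bool}
    (hp : b.repr x p ≠ 0) : ∃ a c : ℕ, p = (a, c, false) ∧ 2 * ((a : ℤ) - c) = i := by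
  obtain ⟨a, c, _ | _⟩ := p
  · refine ⟨a, c, rfl, by_contra fun hi => hp ?_⟩
    exact b.repr_eq_zero_of_mem_of_ne monomialDegree (basis_mem hγ hγ' hb hy) hx
      (by simp only [monomialDegree, cond_false]; omega)
  · exact absurd (KoszulComplex.repr_true_eq_zero_of_d_eq_zero b
      (d_basis_true hγ hγ' hdγ hdγ' hb hdy) (d_basis_false hγ hγ' hdγ hdγ' hb) hdx a c) hp

end KoszulLaurent

open KoszulLaurent in
/-- the CDGA `D = ℚ[γ,γ̄] ⊗ E(y)` with `|γ| = 2`, `|γ̄| = -2`, `|y| = 1`,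
`d γ = d γ̄ = 0` and `d y = 1 - γγ̄` (encoded as a CDGA with elements `γ, γ̄, y` of
the given degrees and differentials, such that the monomials `γ^a γ̄^b y^ε` form a
`ℚ`-basis) has homology isomorphic as a graded `ℚ`-algebra to the Laurent
polynomial ring `ℚ[β^{±1}]` with `|β| = 2`, the isomorphism sending the class of
`γ` to `β`. -/
theorem koszul_laurent_homology (D : CDGA) (γ γ' y : D.carrier)
    (hγ : γ ∈ D.grading 2) (hγ' : γ' ∈ D.grading (-2)) (hy : y ∈ D.grading 1)
    (hdγ : D.d γ = 0) (hdγ' : D.d γ' = 0) (hdy : D.d y = 1 - γ * γ')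
    (b : Module.Basis (ℕ × ℕ × Bool) ℚ D.carrier)
    (hb : ∀ p : ℕ × ℕ × Bool, b p = γ ^ p.1 * γ' ^ p.2.1 * (cond p.2.2 y 1)) :
    HomologyIsLaurentOn D γ γ' := by
  have hd₀ := d_basis_false hγ hγ' hdγ hdγ' hb
  have hd₁ := d_basis_true hγ hγ' hdγ hdγ' hb hdy
  refine ⟨hγ, hγ', hdγ, hdγ', ⟨-y, neg_mem (by simpa using hy), by rw [map_neg, hdy, neg_sub]⟩,
    fun k x hx hdx => ?_, fun k x hx hdx => ?_, fun k ⟨z, _, hz⟩ => ?_⟩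
  · obtain rfl : x = 0 := b.ext_elem_iff.mpr fun p => by_contra fun hp => by
      obtain ⟨a, c, -, h⟩ :=
        exists_eq_false_of_repr_ne_zero hγ hγ' hdγ hdγ' hb hy hdy hx hdx (by simpa using hp)
      omega
    exact ⟨0, zero_mem _, map_zero _⟩
  · have hipow : ipow γ γ' k ∈ D.grading (2 * k) := by
      rw [ipow_eq_basis hb]
      convert basis_mem hγ hγ' hb hy _ using 2
      simp only [monomialDegree, cond_false]
      omega
    refine ⟨∑ p ∈ (b.repr x).support, b.repr x p,
      D.isBoundary_of_mem_range (sub_mem hx (Submodule.smul_mem _ _ hipow)) ?_⟩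
    rw [ipow_eq_basis hb]
    refine KoszulComplex.sub_smul_basis_mem_range b hd₁ k fun p hp => ?_
    obtain ⟨a, c, rfl, h⟩ := exists_eq_false_of_repr_ne_zero hγ hγ' hdγ hdγ' hb hy hdy hx hdx hp
    exact ⟨a, c, rfl, by omega⟩
  · rw [ipow_eq_basis hb] at hz
    exact KoszulComplex.basis_false_notMem_range b hd₁ hd₀ _ _ ⟨z, hz⟩
end
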